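/- arXiv:2308.15549 — 3 statements merged into one kernel-verified Lean document; each statement's English description precedes it below -/
import Mathlib

section
/- Let τ > 0, h > 0, and let K : ℝ → ℝ be a nonnegative measurable function supported in (−1,1), symmetric (K(−u)=K(u) for all u), with 2∫₀¹ K(u) du = 1 and ∫₀¹ u K(u) du < ∞. Let g : [0,τ] × [0,τ] → ℝ be measurable and bounded, and uniformly Lipschitz in its second argument: |g(t,r₁) − g(t,r₂)| ≤ L*|r₁ − r₂| for all t, r₁, r₂ ∈ [0,τ], where L* > 0. Then |2∫₀^τ ∫₀^t (1/h) K((t−r)/h) g(t,r) dr dt − ∫₀^τ g(t,t) dt| ≤ 2h (sup_{t∈[0,τ]} |g(t,t)| + τ L*) ∫₀¹ u K(u) du. -/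
/-!
Substituting `r = t - h u` turns the inner integral into `∫₀¹ K u · g (t, t - h u) du`, cut off
where `t < h u`. As `2 ∫₀¹ K = 1`, the error at `t` is an integral against `2 K u` of a quantity
bounded by `L h u` (Lipschitz in the second variable) off the cut-off region and by
`S = sup |g (s, s)|` on it. Integrating in `t` first (Fubini), the cut-off region `{t < h u}` has
length at most `h u`, so the total error is at most `∫₀¹ 2 K u · h u (τ L + S) du`.
-/

open MeasureTheory Set

open Function (uncurry)

theorem intervalIntegral_rescaled_kernel_mul (K f : ℝ → ℝ) {h : ℝ} (hh : h ≠ 0) (t : ℝ) :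
    ∫ r in (0:ℝ)..t, 1 / h * K ((t - r) / h) * f r =
      ∫ u in (0:ℝ)..t / h, K u * f (t - h * u) := by
  have hsub := intervalIntegral.integral_comp_sub_mul (fun r => K ((t - r) / h) * f r)
    (a := 0) (b := t / h) hh t
  simp only [sub_sub_cancel, mul_div_cancel_left₀ _ hh, mul_div_cancel₀ _ hh, sub_self,
    mul_zero, sub_zero] at hsub
  rw [hsub, smul_eq_mul, ← intervalIntegral.integral_const_mul]
  simp_rw [one_div, mul_assoc]

theorem intervalIntegral_eq_setIntegral_Ioc_indicator {F : ℝ → ℝ} (hF : ∀ u, 1 ≤ u → F u = 0)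
    {c : ℝ} (hc : 0 ≤ c) : ∫ u in (0:ℝ)..c, F u = ∫ u in Ioc 0 1, (Iic c).indicator F u := by
  rw [intervalIntegral.integral_of_le hc, setIntegral_indicator measurableSet_Iic]
  refine setIntegral_eq_of_subset_of_forall_sdiff_eq_zero measurableSet_Ioc
    (fun u hu => ⟨hu.1.1, hu.2⟩) fun u hu => hF u ?_
  by_contra hu1
  exact hu.2 ⟨⟨hu.1.1, (not_le.1 hu1).le⟩, hu.1.2⟩

theorem intervalIntegral_rescaled_kernel_eq {K : ℝ → ℝ} (hK : ∀ u, 1 ≤ u → K u = 0) {h t : ℝ}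
    (hh : 0 < h) (ht : 0 ≤ t) (f : ℝ → ℝ) :
    ∫ r in (0:ℝ)..t, 1 / h * K ((t - r) / h) * f r =
      ∫ u in Ioc 0 1, K u * (Iic (t / h)).indicator (fun u => f (t - h * u)) u := by
  rw [intervalIntegral_rescaled_kernel_mul K f hh.ne',
    intervalIntegral_eq_setIntegral_Ioc_indicator (fun u hu => by rw [hK u hu, zero_mul])
      (div_nonneg ht hh.le)]
  simp_rw [indicator_mul_right]

theorem measurable_indicator_shift {g : ℝ → ℝ → ℝ} (hg : Measurable (uncurry g)) (h : ℝ) :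
    Measurable (uncurry fun t u => (Iic (t / h)).indicator (fun u => g t (t - h * u)) u) := by
  change Measurable fun p : ℝ × ℝ =>
    {q : ℝ × ℝ | q.2 ≤ q.1 / h}.indicator (fun q => g q.1 (q.1 - h * q.2)) p
  exact (hg.comp (measurable_fst.prodMk (measurable_fst.sub (measurable_snd.const_mul h))))
    |>.indicator (measurableSet_le measurable_snd (measurable_fst.div_const h))

noncomputable def biasMajorant (L S h t u : ℝ) : ℝ :=
  L * (h * u) + (Iio (h * u)).indicator (fun _ => S) t

theorem measurable_biasMajorant (L S h : ℝ) : Measurable (uncurry (biasMajorant L S h)) := by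
  change Measurable fun p : ℝ × ℝ =>
    L * (h * p.2) + {q : ℝ × ℝ | q.1 < h * q.2}.indicator (fun _ => S) p
  exact ((measurable_snd.const_mul h).const_mul L).add <| measurable_const.indicator <|
    measurableSet_lt measurable_fst (measurable_snd.const_mul h)

theorem abs_indicator_shift_sub_le_biasMajorant {f : ℝ → ℝ} {L S h t u : ℝ} (hL : 0 ≤ L)
    (hh : 0 < h) (hu : 0 ≤ u) (hf : ∀ r ∈ Icc 0 t, |f r - f t| ≤ L * |r - t|) (hS : |f t| ≤ S) :
    |(Iic (t / h)).indicator (fun u => f (t - h * u)) u - f t| ≤ biasMajorant L S h t u := by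
  have hhu : 0 ≤ h * u := mul_nonneg hh.le hu
  by_cases hut : h * u ≤ t
  · rw [biasMajorant, indicator_of_mem (show u ∈ Iic (t / h) from (le_div_iff₀' hh).2 hut),
      indicator_of_notMem (show t ∉ Iio (h * u) from not_lt.2 hut), add_zero]
    calc |f (t - h * u) - f t| ≤ L * |t - h * u - t| := hf _ ⟨by linarith, by linarith⟩
      _ = L * (h * u) := by rw [sub_sub_cancel_left, abs_neg, abs_of_nonneg hhu]
  · rw [biasMajorant,
      indicator_of_notMem (show u ∉ Iic (t / h) from fun h' => hut ((le_div_iff₀' hh).1 h')),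
      indicator_of_mem (show t ∈ Iio (h * u) from not_le.1 hut), zero_sub, abs_neg]
    nlinarith [mul_nonneg hL hhu]

theorem abs_biasMajorant_le {L S h t u : ℝ} (hL : 0 ≤ L) (hS : 0 ≤ S) (hh : 0 ≤ h)
    (hu : u ∈ Icc 0 1) : |biasMajorant L S h t u| ≤ L * h + S := by
  have hind : (Iio (h * u)).indicator (fun _ => S) t ∈ Icc 0 S := by
    by_cases ht : t ∈ Iio (h * u) <;> simp [ht, hS]
  have hLhu : L * (h * u) ∈ Icc 0 (L * h) :=
    ⟨by have := hu.1; positivity, by nlinarith [hu.2, mul_nonneg hL hh]⟩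
  rw [biasMajorant, abs_le]
  constructor <;> linarith [hind.1, hind.2, hLhu.1, hLhu.2]

theorem setIntegral_biasMajorant_le {L S h τ u : ℝ} (hS : 0 ≤ S) (hτ : 0 ≤ τ) (hhu : 0 ≤ h * u) :
    ∫ t in Ioc 0 τ, biasMajorant L S h t u ≤ h * u * (S + τ * L) := by
  have hvol : volume.real (Iio (h * u) ∩ Ioc 0 τ) ≤ h * u :=
    calc volume.real (Iio (h * u) ∩ Ioc 0 τ) ≤ volume.real (Ioc 0 (h * u)) :=
          measureReal_mono (fun x hx => ⟨hx.2.1, hx.1.le⟩) measure_Ioc_lt_top.ne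
      _ = h * u := by simp [hhu]
  simp only [biasMajorant]
  rw [integral_add (integrable_const _) ((integrable_const S).indicator measurableSet_Iio),
    integral_indicator_const _ measurableSet_Iio, measureReal_restrict_apply measurableSet_Iio,
    setIntegral_const, Real.volume_real_Ioc_of_le hτ, sub_zero, smul_eq_mul, smul_eq_mul]
  nlinarith [mul_le_mul_of_nonneg_right hvol hS]

section Fubini

variable {α β : Type*} [MeasurableSpace α] [MeasurableSpace β] {μ : Measure α} {ν : Measure β}
  [SFinite μ] [SFinite ν]

theorem ae_mem_restrict_prod {s : Set α} {t : Set β} (hs : MeasurableSet s)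
    (ht : MeasurableSet t) : ∀ᵐ p ∂(μ.restrict s).prod (ν.restrict t), p ∈ s ×ˢ t := by
  rw [Measure.prod_restrict]
  exact ae_restrict_mem (hs.prod ht)

theorem integrable_restrict_prod_of_abs_le {s : Set α} {t : Set β} (hs : MeasurableSet s)
    (ht : MeasurableSet t) [IsFiniteMeasure (μ.restrict s)] {F : α → β → ℝ} {k : β → ℝ}
    (hk : IntegrableOn k t ν) (hF : Measurable (uncurry F)) (C : ℝ)
    (hbound : ∀ x ∈ s, ∀ y ∈ t, |F x y| ≤ C * k y) :
    Integrable (uncurry F) ((μ.restrict s).prod (ν.restrict t)) := by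
  refine ((hk.comp_snd _).const_mul C).mono' hF.aestronglyMeasurable ?_
  filter_upwards [ae_mem_restrict_prod hs ht] with p hp
  exact hbound p.1 hp.1 p.2 hp.2

theorem abs_integral_integral_sub_le {F₁ F₂ G : α → β → ℝ}
    (hF₁ : AEStronglyMeasurable (uncurry F₁) (μ.prod ν)) (hF₂ : Integrable (uncurry F₂) (μ.prod ν))
    (hG : Integrable (uncurry G) (μ.prod ν))
    (hle : ∀ᵐ p ∂μ.prod ν, |F₁ p.1 p.2 - F₂ p.1 p.2| ≤ G p.1 p.2) :
    |∫ x, ∫ y, F₁ x y ∂ν ∂μ - ∫ x, ∫ y, F₂ x y ∂ν ∂μ| ≤ ∫ y, ∫ x, G x y ∂μ ∂ν := by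
  have hdiff : Integrable (uncurry F₁ - uncurry F₂) (μ.prod ν) :=
    hG.mono' (hF₁.sub hF₂.aestronglyMeasurable) hle
  have hF₁' : Integrable (uncurry F₁) (μ.prod ν) := by simpa using hdiff.add hF₂
  rw [integral_integral hF₁', integral_integral hF₂, ← integral_integral_swap hG,
    integral_integral hG]
  calc |∫ z, F₁ z.1 z.2 ∂μ.prod ν - ∫ z, F₂ z.1 z.2 ∂μ.prod ν|
      = |∫ z, (uncurry F₁ - uncurry F₂) z ∂μ.prod ν| := by rw [integral_sub' hF₁' hF₂]; rfl
    _ ≤ ∫ z, |(uncurry F₁ - uncurry F₂) z| ∂μ.prod ν := abs_integral_le_integral_abs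
    _ ≤ ∫ z, G z.1 z.2 ∂μ.prod ν := integral_mono_ae hdiff.abs hG hle

end Fubini

section KernelMajorant

variable {k : ℝ → ℝ} {L S h τ : ℝ}

theorem integrable_kernel_mul_biasMajorant (hk : IntegrableOn k (Ioc 0 1)) (hkm : Measurable k)
    (hL : 0 ≤ L) (hS : 0 ≤ S) (hh : 0 ≤ h) :
    Integrable (uncurry fun t u => k u * biasMajorant L S h t u)
      ((volume.restrict (Ioc 0 τ)).prod (volume.restrict (Ioc 0 1))) :=
  integrable_restrict_prod_of_abs_le measurableSet_Ioc measurableSet_Ioc hk.abs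
    ((hkm.comp measurable_snd).mul (measurable_biasMajorant L S h)) (L * h + S)
    fun _ _ u hu => by
      rw [abs_mul, mul_comm]
      exact mul_le_mul_of_nonneg_right (abs_biasMajorant_le hL hS hh (Ioc_subset_Icc_self hu))
        (abs_nonneg _)

theorem integral_integral_kernel_mul_biasMajorant_le (hk : IntegrableOn k (Ioc 0 1))
    (hkm : Measurable k) (hk0 : ∀ u, 0 ≤ k u) (hmom : IntegrableOn (fun u => u * k u) (Ioc 0 1))
    (hL : 0 ≤ L) (hS : 0 ≤ S) (hh : 0 ≤ h) (hτ : 0 ≤ τ) :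
    ∫ u in Ioc 0 1, ∫ t in Ioc 0 τ, k u * biasMajorant L S h t u ≤
      h * (S + τ * L) * ∫ u in Ioc 0 1, u * k u := by
  rw [← integral_const_mul]
  refine setIntegral_mono_on
    (integrable_kernel_mul_biasMajorant hk hkm hL hS hh).integral_prod_right
    (hmom.const_mul _) measurableSet_Ioc fun u hu => ?_
  calc ∫ t in Ioc 0 τ, k u * biasMajorant L S h t u
      = k u * ∫ t in Ioc 0 τ, biasMajorant L S h t u := integral_const_mul _ _
    _ ≤ k u * (h * u * (S + τ * L)) :=
        mul_le_mul_of_nonneg_left (setIntegral_biasMajorant_le hS hτ (by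
          have := hu.1.le; positivity)) (hk0 u)
    _ = h * (S + τ * L) * (u * k u) := by ring

theorem integrable_kernel_mul_diag (hk : IntegrableOn k (Ioc 0 1)) (hkm : Measurable k)
    {g : ℝ → ℝ → ℝ} (hg : Measurable (uncurry g)) (hS : ∀ t ∈ Ioc 0 τ, |g t t| ≤ S) :
    Integrable (uncurry fun t u => k u * g t t)
      ((volume.restrict (Ioc 0 τ)).prod (volume.restrict (Ioc 0 1))) :=
  integrable_restrict_prod_of_abs_le measurableSet_Ioc measurableSet_Ioc hk.abs
    ((hkm.comp measurable_snd).mul (hg.comp (measurable_fst.prodMk measurable_fst))) S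
    fun t ht _ _ => by
      rw [abs_mul, mul_comm]
      exact mul_le_mul_of_nonneg_right (hS t ht) (abs_nonneg _)

end KernelMajorant

theorem kernel_bias_bound_general
    (τ h L : ℝ) (hτ : 0 < τ) (hh : 0 < h) (hL : 0 < L)
    (K : ℝ → ℝ) (hKmeas : Measurable K) (hKnonneg : ∀ u, 0 ≤ K u)
    (hKsupp : ∀ u, u ∉ Set.Ioo (-1 : ℝ) 1 → K u = 0)
    (hKint : 2 * ∫ u in (0:ℝ)..1, K u = 1)
    (hKmom : IntervalIntegrable (fun u => u * K u) volume 0 1)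
    (g : ℝ → ℝ → ℝ) (hgmeas : Measurable (Function.uncurry g))
    (hgbdd : ∃ M, ∀ t ∈ Icc (0:ℝ) τ, ∀ r ∈ Icc (0:ℝ) τ, |g t r| ≤ M)
    (hgLip : ∀ t ∈ Icc (0:ℝ) τ, ∀ r₁ ∈ Icc (0:ℝ) τ, ∀ r₂ ∈ Icc (0:ℝ) τ,
      |g t r₁ - g t r₂| ≤ L * |r₁ - r₂|) :
    |2 * (∫ t in (0:ℝ)..τ, ∫ r in (0:ℝ)..t, (1 / h) * K ((t - r) / h) * g t r)
        - ∫ t in (0:ℝ)..τ, g t t|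
      ≤ 2 * h * ((⨆ t ∈ Icc (0:ℝ) τ, |g t t|) + τ * L) *
          ∫ u in (0:ℝ)..1, u * K u := by
  obtain ⟨M, hM⟩ := hgbdd
  set S := ⨆ t ∈ Icc (0:ℝ) τ, |g t t|
  have hS : ∀ t ∈ Icc 0 τ, |g t t| ≤ S := le_ciSup₂ (f := fun t (_ : t ∈ Icc 0 τ) => |g t t|)
    ⟨M, fun x hx => by obtain ⟨t, ht, rfl⟩ := mem_iUnion.1 hx; exact hM t ht t ht⟩
  have hS0 : 0 ≤ S := (abs_nonneg _).trans (hS 0 ⟨le_rfl, hτ.le⟩)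
  have hK1 : ∀ u, 1 ≤ u → K u = 0 := fun u hu => hKsupp u fun hu' => (not_lt.2 hu) hu'.2
  rw [intervalIntegral.integral_of_le zero_le_one] at hKint ⊢
  rw [intervalIntegrable_iff_integrableOn_Ioc_of_le zero_le_one] at hKmom
  set k : ℝ → ℝ := fun u => 2 * K u
  have hk0 : ∀ u, 0 ≤ k u := fun u => mul_nonneg zero_le_two (hKnonneg u)
  have hkm : Measurable k := hKmeas.const_mul 2
  have hk : IntegrableOn k (Ioc 0 1) :=
    (Integrable.of_integral_ne_zero (right_ne_zero_of_mul_eq_one hKint)).const_mul 2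
  have hinner : 2 * ∫ t in (0:ℝ)..τ, ∫ r in (0:ℝ)..t, 1 / h * K ((t - r) / h) * g t r =
      ∫ t in Ioc 0 τ, ∫ u in Ioc 0 1,
        k u * (Iic (t / h)).indicator (fun u => g t (t - h * u)) u := by
    rw [intervalIntegral.integral_of_le hτ.le, ← integral_const_mul]
    refine setIntegral_congr_fun measurableSet_Ioc fun t ht => ?_
    simp_rw [k, intervalIntegral_rescaled_kernel_eq hK1 hh ht.1.le, mul_assoc, integral_const_mul]
  have hdiag : ∫ t in (0:ℝ)..τ, g t t = ∫ t in Ioc 0 τ, ∫ u in Ioc 0 1, k u * g t t := by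
    simp_rw [k, intervalIntegral.integral_of_le hτ.le, integral_mul_const, integral_const_mul,
      hKint, one_mul]
  rw [hinner, hdiag]
  refine (abs_integral_integral_sub_le
    (((hkm.comp measurable_snd).mul (measurable_indicator_shift hgmeas h)).aestronglyMeasurable)
    (integrable_kernel_mul_diag hk hkm hgmeas fun t ht => hS t (Ioc_subset_Icc_self ht))
    (integrable_kernel_mul_biasMajorant hk hkm hL.le hS0 hh.le) ?_).trans ?_
  · filter_upwards [ae_mem_restrict_prod measurableSet_Ioc measurableSet_Ioc] with ⟨t, u⟩ ⟨ht, hu⟩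
    have ht' := Ioc_subset_Icc_self ht
    rw [← mul_sub, abs_mul, abs_of_nonneg (hk0 u)]
    exact mul_le_mul_of_nonneg_left (abs_indicator_shift_sub_le_biasMajorant hL.le hh hu.1.le
      (fun r hr => hgLip t ht' r ⟨hr.1, hr.2.trans ht'.2⟩ t ht') (hS t ht')) (hk0 u)
  · calc _ ≤ h * (S + τ * L) * ∫ u in Ioc 0 1, u * k u :=
          integral_integral_kernel_mul_biasMajorant_le hk hkm hk0
            (IntegrableOn.congr_fun (hKmom.const_mul 2) (fun u _ => mul_left_comm _ _ _)
              measurableSet_Ioc)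
            hL.le hS0 hh.le hτ.le
      _ = _ := by simp_rw [k, mul_left_comm _ (2 : ℝ), integral_const_mul]; ring

/-- Lemma 1 (kernel approximation / bias bound): the kernel-smoothed double
integral of `g` against `K_h(x) = (2/h) K(x/h)` restricted to `r ≤ t`
approximates the diagonal integral `∫₀^τ g(t,t) dt` at rate `h`. -/
theorem kernel_bias_bound
    (τ h L : ℝ) (hτ : 0 < τ) (hh : 0 < h) (hL : 0 < L)
    (K : ℝ → ℝ) (hKmeas : Measurable K) (hKnonneg : ∀ u, 0 ≤ K u)
    (hKsupp : ∀ u, u ∉ Set.Ioo (-1 : ℝ) 1 → K u = 0)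
    (hKsymm : ∀ u, K (-u) = K u)
    (hKint : 2 * ∫ u in (0:ℝ)..1, K u = 1)
    (hKmom : IntervalIntegrable (fun u => u * K u) volume 0 1)
    (g : ℝ → ℝ → ℝ) (hgmeas : Measurable (Function.uncurry g))
    (hgbdd : ∃ M, ∀ t ∈ Icc (0:ℝ) τ, ∀ r ∈ Icc (0:ℝ) τ, |g t r| ≤ M)
    (hgLip : ∀ t ∈ Icc (0:ℝ) τ, ∀ r₁ ∈ Icc (0:ℝ) τ, ∀ r₂ ∈ Icc (0:ℝ) τ,
      |g t r₁ - g t r₂| ≤ L * |r₁ - r₂|) :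
    |2 * (∫ t in (0:ℝ)..τ, ∫ r in (0:ℝ)..t, (1 / h) * K ((t - r) / h) * g t r)
        - ∫ t in (0:ℝ)..τ, g t t|
      ≤ 2 * h * ((⨆ t ∈ Icc (0:ℝ) τ, |g t t|) + τ * L) *
          ∫ u in (0:ℝ)..1, u * K u :=
  kernel_bias_bound_general τ h L hτ hh hL K hKmeas hKnonneg hKsupp hKint hKmom g hgmeas hgbdd hgLip
end

section
/- Let τ > 0, L > 0, and let f : [0,τ] → ℝ be Lipschitz continuous with constant L. If sup_{t∈[0,τ]} |f(t)| ≤ Lτ/2, then (sup_{t∈[0,τ]} |f(t)|)³ ≤ 3L ∫₀^τ f(t)² dt; in particular, sup_{t∈[0,τ]} |f(t)| ≤ (3L)^{1/3} (∫₀^τ f(t)² dt)^{1/3}, i.e. the supremum norm of f is bounded by a constant times the 2/3 power of its L² norm. -/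
/-!
Let `M = |f t₀|` be the maximum of `|f|`. By the Lipschitz bound, `|f t| ≥ M - L |t - t₀|`, so on
an interval of length `M / L` with endpoint `t₀` the function `f²` dominates the square of a
linear ramp falling from `M` to `0`, whose integral is `M³ / (3L)`. The hypothesis `M ≤ Lτ/2`
guarantees that such an interval fits inside `[0, τ]` on one side of `t₀`.
-/

open MeasureTheory Set NNReal

theorem IsMaxOn.real_biSup_eq {α : Type*} {g : α → ℝ} {s : Set α} {x : α} (hx : x ∈ s)
    (h : IsMaxOn g s x) (h0 : 0 ≤ g x) : ⨆ y ∈ s, g y = g x :=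
  have : Nonempty α := ⟨x⟩
  ciSup_eq_of_forall_le_of_forall_lt_exists_gt (fun _ => Real.iSup_le (fun hy => h hy) h0)
    fun _ hw => ⟨x, by rwa [ciSup_pos hx]⟩

theorem integral_sq_sub_mul (M : ℝ) {K : ℝ} (hK : K ≠ 0) :
    ∫ x in (0:ℝ)..M / K, (M - K * x) ^ 2 = M ^ 3 / (3 * K) := by
  rw [intervalIntegral.integral_comp_mul_left (fun x => (M - x) ^ 2) hK,
    intervalIntegral.integral_comp_sub_left (fun x => x ^ 2), mul_div_cancel₀ _ hK, sub_self,
    mul_zero, sub_zero, integral_pow, smul_eq_mul]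
  field_simp
  ring

namespace LipschitzOnWith

variable {f : ℝ → ℝ} {K : ℝ≥0} {c : ℝ}

theorem cube_div_le_integral_sq_Icc_right (hK : 0 < K)
    (hf : LipschitzOnWith K f (Icc c (c + |f c| / K))) :
    |f c| ^ 3 / (3 * K) ≤ ∫ t in c..c + |f c| / K, f t ^ 2 := by
  set M := |f c|
  have hc : c ≤ c + M / K := le_add_of_nonneg_right (by positivity)
  have hramp : ∀ t ∈ Icc c (c + M / K), (M - K * (t - c)) ^ 2 ≤ f t ^ 2 := by
    intro t ht
    have hdrop : M - K * (t - c) ≤ |f t| := by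
      have := hf.dist_le_mul c (left_mem_Icc.2 hc) t ht
      rw [Real.dist_eq, Real.dist_eq, abs_sub_comm c, abs_of_nonneg (sub_nonneg.2 ht.1)] at this
      linarith [abs_sub_abs_le_abs_sub (f c) (f t)]
    have hpos : 0 ≤ M - K * (t - c) := by
      have : t - c ≤ M / K := by linarith [ht.2]
      rw [le_div_iff₀ (by positivity)] at this
      linarith
    simpa only [sq_abs] using pow_le_pow_left₀ hpos hdrop 2
  calc M ^ 3 / (3 * K) = ∫ t in c..c + M / K, (M - K * (t - c)) ^ 2 := by
        rw [intervalIntegral.integral_comp_sub_right (fun x => (M - K * x) ^ 2), sub_self,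
          add_sub_cancel_left, integral_sq_sub_mul M (by positivity)]
    _ ≤ ∫ t in c..c + M / K, f t ^ 2 :=
        intervalIntegral.integral_mono_on hc (Continuous.intervalIntegrable (by fun_prop) _ _)
          ((hf.continuousOn.pow 2).intervalIntegrable_of_Icc hc) hramp

theorem cube_div_le_integral_sq_Icc_left (hK : 0 < K)
    (hf : LipschitzOnWith K f (Icc (c - |f c| / K) c)) :
    |f c| ^ 3 / (3 * K) ≤ ∫ t in c - |f c| / K..c, f t ^ 2 := by
  -- `f (- -c)` makes this literally the hypothesis of the right-sided case for `t ↦ f (-t)` at `-c`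
  have hneg : LipschitzOnWith K (fun t => f (-t)) (Icc (-c) (-c + |f (- -c)| / K)) := by
    refine LipschitzOnWith.of_dist_le_mul fun s hs t ht => ?_
    have hmaps : ∀ x ∈ Icc (-c) (-c + |f (- -c)| / K), -x ∈ Icc (c - |f c| / K) c :=
      fun x hx => by rw [neg_neg] at hx; exact ⟨by linarith [hx.2], by linarith [hx.1]⟩
    simpa only [Real.dist_eq, sub_neg_eq_add, neg_add_eq_sub, abs_sub_comm t s]
      using hf.dist_le_mul (-s) (hmaps s hs) (-t) (hmaps t ht)
  simpa [intervalIntegral.integral_comp_neg (fun t => f t ^ 2), sub_eq_add_neg, add_comm]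
    using hneg.cube_div_le_integral_sq_Icc_right hK

theorem cube_div_le_integral_sq {a b : ℝ} (hK : 0 < K) (hf : LipschitzOnWith K f (Icc a b))
    (hc : c ∈ Icc a b) (hroom : c + |f c| / K ≤ b ∨ a ≤ c - |f c| / K) :
    |f c| ^ 3 / (3 * K) ≤ ∫ t in a..b, f t ^ 2 := by
  have hlen : 0 ≤ |f c| / K := by positivity
  have hsub : ∀ {a' b' : ℝ}, a ≤ a' → a' ≤ b' → b' ≤ b →
      ∫ t in a'..b', f t ^ 2 ≤ ∫ t in a..b, f t ^ 2 := fun ha hab hb =>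
    intervalIntegral.integral_mono_interval ha hab hb (.of_forall fun _ => sq_nonneg _)
      ((hf.continuousOn.pow 2).intervalIntegrable_of_Icc (ha.trans (hab.trans hb)))
  rcases hroom with hb | ha
  · exact ((hf.mono (Icc_subset_Icc hc.1 hb)).cube_div_le_integral_sq_Icc_right hK).trans
      (hsub hc.1 (le_add_of_nonneg_right hlen) hb)
  · exact ((hf.mono (Icc_subset_Icc ha hc.2)).cube_div_le_integral_sq_Icc_left hK).trans
      (hsub ha (sub_le_self _ hlen) hc.2)

end LipschitzOnWith

/-- Analytic core of Lemma 4: for a Lipschitz function on `[0,τ]` whose sup-norm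
is at most `Lτ/2`, the cube of the sup-norm is bounded by `3L` times the
squared L²-norm; in particular the sup-norm is bounded by a constant times the
`2/3` power of the L²-norm. -/
theorem sup_norm_le_L2_twothirds
    (τ L : ℝ) (hτ : 0 < τ) (hL : 0 < L) (f : ℝ → ℝ)
    (hLip : ∀ s ∈ Icc (0:ℝ) τ, ∀ t ∈ Icc (0:ℝ) τ, |f s - f t| ≤ L * |s - t|)
    (hsup : (⨆ t ∈ Icc (0:ℝ) τ, |f t|) ≤ L * τ / 2) :
    (⨆ t ∈ Icc (0:ℝ) τ, |f t|) ^ 3 ≤ 3 * L * ∫ t in (0:ℝ)..τ, (f t) ^ 2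
      ∧ (⨆ t ∈ Icc (0:ℝ) τ, |f t|)
          ≤ (3 * L) ^ ((1:ℝ)/3) * (∫ t in (0:ℝ)..τ, (f t) ^ 2) ^ ((1:ℝ)/3) := by
  set M := ⨆ t ∈ Icc (0:ℝ) τ, |f t|
  have hf : LipschitzOnWith L.toNNReal f (Icc 0 τ) := .of_dist_le_mul fun s hs t ht => by
    simpa [Real.dist_eq, hL.le] using hLip s hs t ht
  obtain ⟨t₀, ht₀, hmax⟩ := isCompact_Icc.exists_isMaxOn (nonempty_Icc.2 hτ.le)
    (continuous_abs.comp_continuousOn hf.continuousOn)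
  have hM : M = |f t₀| := hmax.real_biSup_eq ht₀ (abs_nonneg _)
  have hroom : M / L ≤ τ / 2 := by rw [div_le_iff₀ hL]; linarith
  have hmass : M ^ 3 / (3 * L) ≤ ∫ t in (0:ℝ)..τ, f t ^ 2 := by
    have := hf.cube_div_le_integral_sq (Real.toNNReal_pos.2 hL) ht₀ (by
      simp only [Real.coe_toNNReal _ hL.le, ← hM]
      rcases le_total t₀ (τ / 2) with h | h
      exacts [.inl (by linarith), .inr (by linarith)])
    rwa [Real.coe_toNNReal _ hL.le, ← hM] at this
  have hcube : M ^ 3 ≤ 3 * L * ∫ t in (0:ℝ)..τ, f t ^ 2 := by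
    rwa [div_le_iff₀ (by positivity), mul_comm] at hmass
  have hI : 0 ≤ ∫ t in (0:ℝ)..τ, f t ^ 2 :=
    intervalIntegral.integral_nonneg hτ.le fun _ _ => sq_nonneg _
  refine ⟨hcube, ?_⟩
  rw [one_div, ← Real.mul_rpow (by positivity) hI,
    Real.le_rpow_inv_iff_of_pos (hM ▸ abs_nonneg _) (by positivity) (by norm_num)]
  exact_mod_cast hcube
end

section
/- Let (Ω, F, P) be a probability space, let m ⊆ F be a sub-σ-algebra, let f, g ∈ L²(P) with f measurable with respect to m, and let η ∈ [0,1]. Suppose that P-almost surely (E[g | m])² ≤ (1 − η) E[g² | m]. Then (E[f g])² ≤ (1 − η) E[f²] E[g²]. -/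
/-!
Conditioning on `m` does not change `∫ f g`, since `f` is `m`-measurable and can be pulled out:
`∫ f g = ∫ f E[g|m]`. Cauchy–Schwarz then gives `(∫ f g)² ≤ ∫ f² · ∫ E[g|m]²`, and integrating
the hypothesis bounds `∫ E[g|m]²` by `(1 - η) ∫ E[g²|m] = (1 - η) ∫ g²`.
-/

open MeasureTheory

section

variable {Ω : Type*} {m m₀ : MeasurableSpace Ω} {μ : Measure Ω}

theorem MeasureTheory.MemLp.inner_toLp_eq_integral_mul {f g : Ω → ℝ}
    (hf : MemLp f 2 μ) (hg : MemLp g 2 μ) :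
    inner ℝ (hf.toLp f) (hg.toLp g) = ∫ ω, f ω * g ω ∂μ := by
  rw [L2.inner_def]
  refine integral_congr_ae ?_
  filter_upwards [hf.coeFn_toLp, hg.coeFn_toLp] with ω hfω hgω
  rw [hfω, hgω, real_inner_eq_re_inner, RCLike.inner_apply, mul_comm]
  rfl

theorem sq_integral_mul_le_integral_sq_mul_integral_sq {f g : Ω → ℝ}
    (hf : MemLp f 2 μ) (hg : MemLp g 2 μ) :
    (∫ ω, f ω * g ω ∂μ) ^ 2 ≤ (∫ ω, f ω ^ 2 ∂μ) * ∫ ω, g ω ^ 2 ∂μ := by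
  simpa only [MemLp.inner_toLp_eq_integral_mul, ← sq] using
    real_inner_mul_inner_self_le (hf.toLp f) (hg.toLp g)

theorem integral_mul_condExp_of_stronglyMeasurable_left (hm : m ≤ m₀)
    [SigmaFinite (μ.trim hm)] {f g : Ω → ℝ} (hf : StronglyMeasurable[m] f)
    (hfg : Integrable (f * g) μ) (hg : Integrable g μ) :
    ∫ ω, f ω * (μ[g|m]) ω ∂μ = ∫ ω, f ω * g ω ∂μ :=
  (integral_congr_ae (condExp_mul_of_stronglyMeasurable_left hf hfg hg).symm).trans
    (integral_condExp hm)

theorem integral_sq_condExp_le_of_ae_sq_condExp_le (hm : m ≤ m₀) [SigmaFinite (μ.trim hm)]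
    {g : Ω → ℝ} (hg : MemLp g 2 μ) {c : ℝ}
    (hcond : ∀ᵐ ω ∂μ, (μ[g|m]) ω ^ 2 ≤ c * (μ[fun ω' => g ω' ^ 2|m]) ω) :
    ∫ ω, (μ[g|m]) ω ^ 2 ∂μ ≤ c * ∫ ω, g ω ^ 2 ∂μ :=
  calc ∫ ω, (μ[g|m]) ω ^ 2 ∂μ
      ≤ ∫ ω, c * (μ[fun ω' => g ω' ^ 2|m]) ω ∂μ :=
        integral_mono_ae (hg.condExp one_le_two).integrable_sq
          (integrable_condExp.const_mul c) hcond
    _ = c * ∫ ω, g ω ^ 2 ∂μ := by rw [integral_const_mul, integral_condExp hm]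

end

theorem conditional_cauchy_schwarz_general
    {Ω : Type*} {F : MeasurableSpace Ω} (μ : Measure Ω) [IsProbabilityMeasure μ]
    (m : MeasurableSpace Ω) (hm : m ≤ F)
    (f g : Ω → ℝ) (hf2 : MemLp f 2 μ) (hg2 : MemLp g 2 μ)
    (hfm : StronglyMeasurable[m] f)
    (η : ℝ)
    (hcond : ∀ᵐ ω ∂μ, (μ[g|m]) ω ^ 2 ≤ (1 - η) * (μ[fun ω' => g ω' ^ 2|m]) ω) :
    (∫ ω, f ω * g ω ∂μ) ^ 2
      ≤ (1 - η) * (∫ ω, f ω ^ 2 ∂μ) * ∫ ω, g ω ^ 2 ∂μ := by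
  have hf2_nonneg : 0 ≤ ∫ ω, f ω ^ 2 ∂μ := integral_nonneg fun ω => sq_nonneg _
  calc (∫ ω, f ω * g ω ∂μ) ^ 2
      = (∫ ω, f ω * (μ[g|m]) ω ∂μ) ^ 2 := by
        rw [integral_mul_condExp_of_stronglyMeasurable_left hm hfm (hf2.integrable_mul hg2)
          (hg2.integrable one_le_two)]
    _ ≤ (∫ ω, f ω ^ 2 ∂μ) * ∫ ω, (μ[g|m]) ω ^ 2 ∂μ :=
        sq_integral_mul_le_integral_sq_mul_integral_sq hf2 (hg2.condExp one_le_two)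
    _ ≤ (∫ ω, f ω ^ 2 ∂μ) * ((1 - η) * ∫ ω, g ω ^ 2 ∂μ) :=
        mul_le_mul_of_nonneg_left (integral_sq_condExp_le_of_ae_sq_condExp_le hm hg2 hcond)
          hf2_nonneg
    _ = (1 - η) * (∫ ω, f ω ^ 2 ∂μ) * ∫ ω, g ω ^ 2 ∂μ := by ring

/-- Conditional Cauchy–Schwarz step: if the conditional expectation of `g`
given the sub-σ-algebra `m` satisfies `(E[g|m])² ≤ (1−η) E[g²|m]` a.s., then
for any `m`-measurable `f ∈ L²`, `(E[fg])² ≤ (1−η) E[f²] E[g²]`. -/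
theorem conditional_cauchy_schwarz
    {Ω : Type*} {F : MeasurableSpace Ω} (μ : Measure Ω) [IsProbabilityMeasure μ]
    (m : MeasurableSpace Ω) (hm : m ≤ F)
    (f g : Ω → ℝ) (hf2 : MemLp f 2 μ) (hg2 : MemLp g 2 μ)
    (hfm : StronglyMeasurable[m] f)
    (η : ℝ) (hη : η ∈ Set.Icc (0:ℝ) 1)
    (hcond : ∀ᵐ ω ∂μ, (μ[g|m]) ω ^ 2 ≤ (1 - η) * (μ[fun ω' => g ω' ^ 2|m]) ω) :
    (∫ ω, f ω * g ω ∂μ) ^ 2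
      ≤ (1 - η) * (∫ ω, f ω ^ 2 ∂μ) * ∫ ω, g ω ^ 2 ∂μ :=
  conditional_cauchy_schwarz_general μ m hm f g hf2 hg2 hfm η hcond
end
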